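/- arXiv:2108.06929 — 5 statements merged into one kernel-verified Lean document; each statement's English description precedes it below -/
import Mathlib

section
/- Let a, b > 0, let 0 < p < 1 with q given by 1/p + 1/q = 1 (so q < 0), and let t ∈ (0,1). Then inf_{λ∈(0,1)} [ (1−t)^{1/p}(1−λ)^{1/q} a + t^{1/p} λ^{1/q} b ] = ((1−t) a^p + t b^p)^{1/p}. -/
/-!
With `A = (1 - t)^(1/p) a` and `B = t^(1/p) b` the claim reads
`inf_λ A (1 - λ)^(1/q) + B λ^(1/q) = (A^p + B^p)^(1/p)`, a reverse Hölder inequality with its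
equality case. For `0 < p < 1` the weighted AM-GM inequality gives the reverse Young inequality
`u^p ≤ p u v + (1 - p) v^q`; applied to `u = A / s`, `v = (1 - λ)^(1/q)` and to `u = B / s`,
`v = λ^(1/q)`, where `s` is the value at `λ`, and summed, it yields `(A^p + B^p) / s^p ≤ 1`.
Equality holds at `λ = B^p / (A^p + B^p)`.
-/

open Set Real

section ConjugateExponents

variable {p q : ℝ}

lemma ne_zero_of_one_div_add_one_div_eq_one (hp : p ≠ 1) (hpq : 1 / p + 1 / q = 1) : q ≠ 0 := by
  rintro rfl
  simp only [div_zero, add_zero, one_div, inv_eq_one] at hpq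
  exact hp hpq

lemma one_add_mul_one_div_eq_of_one_div_add_one_div_eq_one (hp : p ≠ 0)
    (hpq : 1 / p + 1 / q = 1) : 1 + p * (1 / q) = p := by
  field_simp at hpq ⊢
  linarith

lemma rpow_le_mul_mul_add_rpow (hp0 : 0 < p) (hp1 : p < 1) (hpq : 1 / p + 1 / q = 1)
    {u v : ℝ} (hu : 0 ≤ u) (hv : 0 < v) :
    u ^ p ≤ p * (u * v) + (1 - p) * v ^ q := by
  have hq := ne_zero_of_one_div_add_one_div_eq_one hp1.ne hpq
  have hexp : p + q * (1 - p) = 0 := by field_simp at hpq; linarith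
  calc u ^ p = (u * v) ^ p * (v ^ q) ^ (1 - p) := by
        rw [mul_rpow hu hv.le, ← rpow_mul hv.le, mul_assoc, ← rpow_add hv, hexp, rpow_zero,
          mul_one]
    _ ≤ p * (u * v) + (1 - p) * v ^ q :=
        geom_mean_le_arith_mean2_weighted hp0.le (by linarith) (by positivity) (by positivity)
          (by ring)

end ConjugateExponents

section ReverseHolder

variable {A B p q : ℝ}

theorem rpow_add_rpow_one_div_le_mul_one_sub_rpow_add_mul_rpow (hA : 0 < A) (hB : 0 < B)
    (hp0 : 0 < p) (hp1 : p < 1) (hpq : 1 / p + 1 / q = 1) {l : ℝ} (hl : l ∈ Ioo (0 : ℝ) 1) :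
    (A ^ p + B ^ p) ^ (1 / p) ≤ A * (1 - l) ^ (1 / q) + B * l ^ (1 / q) := by
  obtain ⟨hl0, hl1⟩ := hl
  have hl1' : 0 < 1 - l := by linarith
  set s := A * (1 - l) ^ (1 / q) + B * l ^ (1 / q)
  have hs : 0 < s := by positivity
  have hq := ne_zero_of_one_div_add_one_div_eq_one hp1.ne hpq
  have young {C x : ℝ} (hC : 0 < C) (hx : 0 < x) :
      (C / s) ^ p ≤ p * (C * x ^ (1 / q) / s) + (1 - p) * x := by
    have h := rpow_le_mul_mul_add_rpow hp0 hp1 hpq (div_pos hC hs).le (rpow_pos_of_pos hx (1 / q))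
    rwa [← rpow_mul hx.le, one_div_mul_cancel hq, rpow_one, div_mul_eq_mul_div] at h
  have hle : (A ^ p + B ^ p) / s ^ p ≤ 1 :=
    calc (A ^ p + B ^ p) / s ^ p = (A / s) ^ p + (B / s) ^ p := by
          rw [div_rpow hA.le hs.le, div_rpow hB.le hs.le, add_div]
      _ ≤ (p * (A * (1 - l) ^ (1 / q) / s) + (1 - p) * (1 - l))
            + (p * (B * l ^ (1 / q) / s) + (1 - p) * l) :=
          add_le_add (young hA hl1') (young hB hl0)
      _ = 1 := by field_simp; ring
  rw [div_le_one (by positivity)] at hle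
  calc (A ^ p + B ^ p) ^ (1 / p) ≤ (s ^ p) ^ (1 / p) :=
        rpow_le_rpow (by positivity) hle (by positivity)
    _ = s := by rw [← rpow_mul hs.le, mul_one_div_cancel hp0.ne', rpow_one]

theorem mul_one_sub_rpow_add_mul_rpow_eq (hA : 0 < A) (hB : 0 < B) (hp : p ≠ 0)
    (hpq : 1 / p + 1 / q = 1) :
    A * (1 - B ^ p / (A ^ p + B ^ p)) ^ (1 / q) + B * (B ^ p / (A ^ p + B ^ p)) ^ (1 / q)
      = (A ^ p + B ^ p) ^ (1 / p) := by
  set S := A ^ p + B ^ p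
  have hS : 0 < S := by positivity
  have hexp := one_add_mul_one_div_eq_of_one_div_add_one_div_eq_one hp hpq
  have hterm {X : ℝ} (hX : 0 < X) : X * (X ^ p / S) ^ (1 / q) = X ^ p / S ^ (1 / q) := by
    rw [div_rpow (by positivity) hS.le, ← rpow_mul hX.le, mul_div_assoc',
      ← rpow_one_add' hX.le (by rw [hexp]; exact hp), hexp]
  have hcompl : 1 - B ^ p / S = A ^ p / S := by field_simp; ring
  rw [hcompl, hterm hA, hterm hB, ← add_div, show 1 / p = 1 - 1 / q by linarith, rpow_sub hS,
    rpow_one]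

theorem iInf_mul_one_sub_rpow_add_mul_rpow (hA : 0 < A) (hB : 0 < B) (hp0 : 0 < p)
    (hp1 : p < 1) (hpq : 1 / p + 1 / q = 1) :
    ⨅ l : Ioo (0 : ℝ) 1, (A * (1 - (l : ℝ)) ^ (1 / q) + B * (l : ℝ) ^ (1 / q))
      = (A ^ p + B ^ p) ^ (1 / p) := by
  have hmin : B ^ p / (A ^ p + B ^ p) ∈ Ioo (0 : ℝ) 1 :=
    ⟨by positivity, (div_lt_one (by positivity)).2 (lt_add_of_pos_left _ (by positivity))⟩
  have : Nonempty (Ioo (0 : ℝ) 1) := ⟨⟨_, hmin⟩⟩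
  have hlow (l : Ioo (0 : ℝ) 1) :
      (A ^ p + B ^ p) ^ (1 / p) ≤ A * (1 - (l : ℝ)) ^ (1 / q) + B * (l : ℝ) ^ (1 / q) :=
    rpow_add_rpow_one_div_le_mul_one_sub_rpow_add_mul_rpow hA hB hp0 hp1 hpq l.2
  exact le_antisymm ((ciInf_le ⟨_, forall_mem_range.2 hlow⟩ ⟨_, hmin⟩).trans_eq
    (mul_one_sub_rpow_add_mul_rpow_eq hA hB hp0.ne' hpq)) (le_ciInf hlow)

end ReverseHolder

lemma rpow_one_div_mul_rpow {c x p : ℝ} (hc : 0 ≤ c) (hx : 0 ≤ x) (hp : p ≠ 0) :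
    (c ^ (1 / p) * x) ^ p = c * x ^ p := by
  rw [mul_rpow (by positivity) hx, ← rpow_mul hc, one_div_mul_cancel hp, rpow_one]

/-- For `a, b > 0`, `0 < p < 1` with `1/p + 1/q = 1` (so `q < 0`)
and `t ∈ (0,1)`,
`inf_{λ∈(0,1)} [(1−t)^{1/p}(1−λ)^{1/q} a + t^{1/p} λ^{1/q} b] = ((1−t)a^p + t b^p)^{1/p}`. -/
theorem stmt_2 (a b p q t : ℝ) (ha : 0 < a) (hb : 0 < b)
    (hp0 : 0 < p) (hp1 : p < 1) (hpq : 1 / p + 1 / q = 1) (ht : t ∈ Ioo (0 : ℝ) 1) :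
    (⨅ l : Ioo (0 : ℝ) 1,
        ((1 - t) ^ (1 / p) * (1 - (l : ℝ)) ^ (1 / q) * a
          + t ^ (1 / p) * (l : ℝ) ^ (1 / q) * b))
      = ((1 - t) * a ^ p + t * b ^ p) ^ (1 / p) := by
  obtain ⟨ht0, ht1⟩ := ht
  have h1t : 0 < 1 - t := by linarith
  have key := iInf_mul_one_sub_rpow_add_mul_rpow (A := (1 - t) ^ (1 / p) * a)
    (B := t ^ (1 / p) * b) (by positivity) (by positivity) hp0 hp1 hpq
  rw [rpow_one_div_mul_rpow h1t.le ha.le hp0.ne', rpow_one_div_mul_rpow ht0.le hb.le hp0.ne'] at key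
  rw [← key]
  congr 1 with l
  ring
end

section
/- Let 0 < p < 1 with q given by 1/p + 1/q = 1 (so q < 0), let K and L be convex bodies in ℝ^n (compact convex sets with nonempty interior) each containing the origin in its interior, and let α, β > 0. Then ⋂_{λ∈(0,1)} ( α^{1/p}(1−λ)^{1/q} K + β^{1/p} λ^{1/q} L ) = { x ∈ ℝ^n : ⟨x,u⟩ ≤ (α h_K(u)^p + β h_L(u)^p)^{1/p} for every unit vector u ∈ S^{n−1} }, where the sum is the Minkowski sum of sets. -/
open Set
open scoped Pointwise RealInnerProductSpace

/-- The support function of a set `K`: `h_K(u) = sup_{y ∈ K} ⟨u, y⟩`. -/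
noncomputable def suppFn {n : ℕ} (K : Set (EuclideanSpace ℝ (Fin n)))
    (u : EuclideanSpace ℝ (Fin n)) : ℝ :=
  sSup ((fun y => ⟪u, y⟫) '' K)

/-!
The support function of `a • K + b • L` is `a * h_K + b * h_L`, and a compact convex set is the
intersection of the half-spaces `⟪x, u⟫ ≤ h(u)`. Hence `x` lies in the intersection iff, for every
unit `u`, `⟪x, u⟫ ≤ α^{1/p} (1-λ)^{1/q} h_K(u) + β^{1/p} λ^{1/q} h_L(u)` for all `λ ∈ (0,1)`.
For `0 < p < 1` the reverse Hölder inequality `x^p u^{1-p} + y^p v^{1-p} ≤ (x + y)^p` (`u + v = 1`)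
shows that the infimum over `λ` of the right-hand side is `(α h_K(u)^p + β h_L(u)^p)^{1/p}`,
attained at `λ = β h_L(u)^p / (α h_K(u)^p + β h_L(u)^p)`.
-/

section SupportFunction

variable {n : ℕ} {K L : Set (EuclideanSpace ℝ (Fin n))} {u x : EuclideanSpace ℝ (Fin n)}

lemma IsCompact.bddAbove_image_inner (hK : IsCompact K) (u : EuclideanSpace ℝ (Fin n)) :
    BddAbove ((fun y => ⟪u, y⟫) '' K) :=
  (hK.image (continuous_const.inner continuous_id)).bddAbove

lemma inner_le_suppFn (hK : IsCompact K) (hx : x ∈ K) : ⟪u, x⟫ ≤ suppFn K u :=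
  le_csSup (hK.bddAbove_image_inner u) ⟨x, hx, rfl⟩

lemma suppFn_pos (hK : IsCompact K) (hK0 : (0 : EuclideanSpace ℝ (Fin n)) ∈ interior K)
    (hu : u ≠ 0) : 0 < suppFn K u := by
  obtain ⟨r, hr, hball⟩ := Metric.mem_nhds_iff.1 (mem_interior_iff_mem_nhds.1 hK0)
  have hu' : 0 < ‖u‖ := norm_pos_iff.2 hu
  set ε := r / (2 * ‖u‖)
  have hε : 0 < ε := by positivity
  have hmem : ε • u ∈ K := by
    apply hball
    rw [Metric.mem_ball, dist_zero_right, norm_smul, Real.norm_of_nonneg hε.le]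
    calc ε * ‖u‖ = r / 2 := by simp only [ε]; field_simp
      _ < r := half_lt_self hr
  calc 0 < ε * (‖u‖ * ‖u‖) := by positivity
    _ = ⟪u, ε • u⟫ := by rw [real_inner_smul_right, real_inner_self_eq_norm_mul_norm]
    _ ≤ suppFn K u := inner_le_suppFn hK hmem

lemma suppFn_smul {c : ℝ} (hc : 0 ≤ c) : suppFn (c • K) u = c * suppFn K u := by
  have himg : (fun y => ⟪u, y⟫) '' (c • K) = c • ((fun y => ⟪u, y⟫) '' K) := by
    rw [← image_smul, image_image, ← image_smul, image_image]
    simp only [real_inner_smul_right, smul_eq_mul]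
  rw [suppFn, himg, Real.sSup_smul_of_nonneg hc, smul_eq_mul, suppFn]

lemma suppFn_add (hK : IsCompact K) (hL : IsCompact L) (hKne : K.Nonempty)
    (hLne : L.Nonempty) : suppFn (K + L) u = suppFn K u + suppFn L u := by
  have himg : (fun y => ⟪u, y⟫) '' (K + L)
      = (fun y => ⟪u, y⟫) '' K + (fun y => ⟪u, y⟫) '' L := by
    rw [← image2_add, image_image2, ← image2_add, image2_image_left, image2_image_right]
    simp only [inner_add_right]
  rw [suppFn, himg, csSup_add (hKne.image _) (hK.bddAbove_image_inner u)
    (hLne.image _) (hL.bddAbove_image_inner u), suppFn, suppFn]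

lemma mem_of_forall_inner_le_suppFn (hK : IsClosed K) (hconv : Convex ℝ K)
    (hne : K.Nonempty) (h : ∀ w : EuclideanSpace ℝ (Fin n), ‖w‖ = 1 → ⟪x, w⟫ ≤ suppFn K w) :
    x ∈ K := by
  by_contra hx
  obtain ⟨f, c, hfK, hfx⟩ := geometric_hahn_banach_closed_point hconv hK hx
  set v := (InnerProductSpace.toDual ℝ (EuclideanSpace ℝ (Fin n))).symm f
  have hv : ∀ y, ⟪v, y⟫ = f y := fun y => InnerProductSpace.toDual_symm_apply
  have hv0 : v ≠ 0 := by
    rintro h0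
    obtain ⟨y, hy⟩ := hne
    have := hfK y hy
    simp only [← hv, h0, inner_zero_left] at this hfx
    linarith
  have hvinv : 0 < ‖v‖⁻¹ := inv_pos.2 (norm_pos_iff.2 hv0)
  have hsupp : suppFn K (‖v‖⁻¹ • v) ≤ ‖v‖⁻¹ * c := by
    refine csSup_le (hne.image _) ?_
    rintro _ ⟨y, hy, rfl⟩
    simp only [real_inner_smul_left, hv]
    exact mul_le_mul_of_nonneg_left (hfK y hy).le hvinv.le
  have hunit : ‖‖v‖⁻¹ • v‖ = 1 := by
    rw [norm_smul, norm_inv, norm_norm, inv_mul_cancel₀ (norm_ne_zero_iff.2 hv0)]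
  have hxw := (h _ hunit).trans hsupp
  rw [real_inner_comm, real_inner_smul_left, hv] at hxw
  linarith [mul_lt_mul_of_pos_left hfx hvinv]

lemma mem_iff_forall_inner_le_suppFn (hK : IsCompact K) (hconv : Convex ℝ K)
    (hne : K.Nonempty) :
    x ∈ K ↔ ∀ u : EuclideanSpace ℝ (Fin n), ‖u‖ = 1 → ⟪x, u⟫ ≤ suppFn K u :=
  ⟨fun hx u _ => real_inner_comm x u ▸ inner_le_suppFn hK hx,
    mem_of_forall_inner_le_suppFn hK.isClosed hconv hne⟩

lemma mem_smul_add_smul_iff (hK : IsCompact K) (hKconv : Convex ℝ K) (hKne : K.Nonempty)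
    (hL : IsCompact L) (hLconv : Convex ℝ L) (hLne : L.Nonempty) {a b : ℝ}
    (ha : 0 ≤ a) (hb : 0 ≤ b) :
    x ∈ a • K + b • L ↔
      ∀ u : EuclideanSpace ℝ (Fin n), ‖u‖ = 1 → ⟪x, u⟫ ≤ a * suppFn K u + b * suppFn L u := by
  rw [mem_iff_forall_inner_le_suppFn ((hK.smul a).add (hL.smul b))
    ((hKconv.smul a).add (hLconv.smul b)) (hKne.smul_set.add hLne.smul_set)]
  simp only [suppFn_add (hK.smul a) (hL.smul b) hKne.smul_set hLne.smul_set,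
    suppFn_smul ha, suppFn_smul hb]

end SupportFunction

section ReverseHolder

variable {p q α β s t : ℝ}

lemma rpow_mul_rpow_add_rpow_mul_rpow_le {x y u v : ℝ} (hp0 : 0 ≤ p) (hp1 : p ≤ 1)
    (hx : 0 ≤ x) (hy : 0 ≤ y) (hu : 0 ≤ u) (hv : 0 ≤ v) (huv : u + v = 1) :
    x ^ p * u ^ (1 - p) + y ^ p * v ^ (1 - p) ≤ (x + y) ^ p := by
  rcases (add_nonneg hx hy).eq_or_lt with hz | hz
  · obtain ⟨rfl, rfl⟩ : x = 0 ∧ y = 0 := ⟨by linarith, by linarith⟩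
    rcases hp0.eq_or_lt with rfl | hp
    · simp [huv]
    · simp [Real.zero_rpow hp.ne']
  set z := x + y
  have amgm : ∀ w m, 0 ≤ w → 0 ≤ m →
      w ^ p * m ^ (1 - p) ≤ z ^ p * (p * (w / z) + (1 - p) * m) := by
    intro w m hw hm
    have hwz : w ^ p = z ^ p * (w / z) ^ p := by
      rw [Real.div_rpow hw hz.le, mul_div_cancel₀ _ (Real.rpow_pos_of_pos hz p).ne']
    rw [hwz, mul_assoc]
    exact mul_le_mul_of_nonneg_left (Real.geom_mean_le_arith_mean2_weighted hp0
      (by linarith) (div_nonneg hw hz.le) hm (by ring)) (Real.rpow_nonneg hz.le p)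
  calc x ^ p * u ^ (1 - p) + y ^ p * v ^ (1 - p)
      ≤ z ^ p * (p * (x / z) + (1 - p) * u) + z ^ p * (p * (y / z) + (1 - p) * v) :=
        add_le_add (amgm x u hx hu) (amgm y v hy hv)
    _ = z ^ p := by
        have : x / z + y / z = 1 := by rw [← add_div, div_self hz.ne']
        linear_combination (z ^ p * p) * this + (z ^ p * (1 - p)) * huv

lemma mul_one_div_of_one_div_add_one_div (hp : p ≠ 0) (hpq : 1 / p + 1 / q = 1) :
    p * (1 / q) = p - 1 := by
  have h : p * (1 / p + 1 / q) = p := by rw [hpq, mul_one]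
  rw [mul_add, mul_one_div_cancel hp] at h
  linarith

lemma rpow_mean_le_of_mem_Ioo (hp0 : 0 < p) (hp1 : p < 1) (hpq : 1 / p + 1 / q = 1)
    (hα : 0 ≤ α) (hβ : 0 ≤ β) (hs : 0 ≤ s) (ht : 0 ≤ t) {l : ℝ} (hl : l ∈ Ioo (0 : ℝ) 1) :
    (α * s ^ p + β * t ^ p) ^ (1 / p)
      ≤ α ^ (1 / p) * (1 - l) ^ (1 / q) * s + β ^ (1 / p) * l ^ (1 / q) * t := by
  obtain ⟨hl0, hl1⟩ := hl
  have hl' : 0 < 1 - l := sub_pos.2 hl1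
  have scale : ∀ γ m w : ℝ, 0 ≤ γ → 0 < m → 0 ≤ w →
      γ * w ^ p = (γ ^ (1 / p) * m ^ (1 / q) * w) ^ p * m ^ (1 - p) := by
    intro γ m w hγ hm hw
    rw [Real.mul_rpow (by positivity) hw, Real.mul_rpow (by positivity) (by positivity),
      ← Real.rpow_mul hγ, ← Real.rpow_mul hm.le, one_div_mul_cancel hp0.ne', Real.rpow_one,
      mul_comm (1 / q), mul_one_div_of_one_div_add_one_div hp0.ne' hpq]
    calc γ * w ^ p = γ * w ^ p * m ^ (p - 1 + (1 - p)) := by norm_num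
      _ = _ := by rw [Real.rpow_add hm]; ring
  have hx : 0 ≤ α ^ (1 / p) * (1 - l) ^ (1 / q) * s := by positivity
  have hy : 0 ≤ β ^ (1 / p) * l ^ (1 / q) * t := by positivity
  have key : α * s ^ p + β * t ^ p
      ≤ (α ^ (1 / p) * (1 - l) ^ (1 / q) * s + β ^ (1 / p) * l ^ (1 / q) * t) ^ p := by
    rw [scale α (1 - l) s hα hl' hs, scale β l t hβ hl0 ht]
    exact rpow_mul_rpow_add_rpow_mul_rpow_le hp0.le hp1.le hx hy hl'.le hl0.le
      (sub_add_cancel 1 l)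
  calc (α * s ^ p + β * t ^ p) ^ (1 / p)
      ≤ ((α ^ (1 / p) * (1 - l) ^ (1 / q) * s + β ^ (1 / p) * l ^ (1 / q) * t) ^ p) ^ (1 / p) :=
        Real.rpow_le_rpow (by positivity) key (by positivity)
    _ = _ := by
        rw [← Real.rpow_mul (add_nonneg hx hy), mul_one_div_cancel hp0.ne', Real.rpow_one]

lemma rpow_mean_eq_at_optimal (hp0 : 0 < p) (hpq : 1 / p + 1 / q = 1) (hα : 0 < α)
    (hβ : 0 < β) (hs : 0 < s) (ht : 0 < t) :
    α ^ (1 / p) * (1 - β * t ^ p / (α * s ^ p + β * t ^ p)) ^ (1 / q) * s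
        + β ^ (1 / p) * (β * t ^ p / (α * s ^ p + β * t ^ p)) ^ (1 / q) * t
      = (α * s ^ p + β * t ^ p) ^ (1 / p) := by
  set S := α * s ^ p + β * t ^ p
  have hS : 0 < S := by positivity
  have term : ∀ γ z : ℝ, 0 < γ → 0 < z →
      γ ^ (1 / p) * (γ * z ^ p / S) ^ (1 / q) * z = γ * z ^ p / S ^ (1 / q) := by
    intro γ z hγ hz
    rw [Real.div_rpow (by positivity) hS.le, Real.mul_rpow hγ.le (by positivity),
      ← Real.rpow_mul hz.le, mul_one_div_of_one_div_add_one_div hp0.ne' hpq]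
    calc γ ^ (1 / p) * (γ ^ (1 / q) * z ^ (p - 1) / S ^ (1 / q)) * z
        = γ ^ (1 / p + 1 / q) * (z ^ (p - 1) * z ^ (1 : ℝ)) / S ^ (1 / q) := by
          rw [Real.rpow_add hγ, Real.rpow_one]; ring
      _ = γ * z ^ p / S ^ (1 / q) := by
          rw [hpq, Real.rpow_one, ← Real.rpow_add hz, sub_add_cancel]
  have hcompl : 1 - β * t ^ p / S = α * s ^ p / S := by
    field_simp
    ring
  have hq : 1 - 1 / q = 1 / p := by linarith
  rw [hcompl, term α s hα hs, term β t hβ ht, ← add_div,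
    ← Real.rpow_one_sub' hS.le (by rw [hq]; positivity), hq]

lemma isLeast_rpow_mean (hp0 : 0 < p) (hp1 : p < 1) (hpq : 1 / p + 1 / q = 1) (hα : 0 < α)
    (hβ : 0 < β) (hs : 0 < s) (ht : 0 < t) :
    IsLeast ((fun l => α ^ (1 / p) * (1 - l) ^ (1 / q) * s + β ^ (1 / p) * l ^ (1 / q) * t) ''
      Ioo 0 1) ((α * s ^ p + β * t ^ p) ^ (1 / p)) := by
  have hS : 0 < α * s ^ p + β * t ^ p := by positivity
  refine ⟨⟨β * t ^ p / (α * s ^ p + β * t ^ p), ⟨by positivity, ?_⟩,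
    rpow_mean_eq_at_optimal hp0 hpq hα hβ hs ht⟩, ?_⟩
  · rw [div_lt_one hS]
    linarith [mul_pos hα (Real.rpow_pos_of_pos hs p)]
  · rintro _ ⟨l, hl, rfl⟩
    exact rpow_mean_le_of_mem_Ioo hp0 hp1 hpq hα.le hβ.le hs.le ht.le hl

end ReverseHolder

/-- For `0 < p < 1` with `1/p + 1/q = 1` (so `q < 0`), convex bodies
`K, L ⊆ ℝⁿ` containing the origin in their interiors and `α, β > 0`, the intersection
`⋂_{λ∈(0,1)} (α^{1/p}(1−λ)^{1/q} K + β^{1/p} λ^{1/q} L)` coincides with the Wulff shape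
`{x : ⟨x,u⟩ ≤ (α h_K(u)^p + β h_L(u)^p)^{1/p} for all unit vectors u}`. -/
theorem stmt_3 {n : ℕ} (p q α β : ℝ) (hp0 : 0 < p) (hp1 : p < 1)
    (hpq : 1 / p + 1 / q = 1) (hα : 0 < α) (hβ : 0 < β)
    (K L : Set (EuclideanSpace ℝ (Fin n)))
    (hKcomp : IsCompact K) (hKconv : Convex ℝ K)
    (hK0 : (0 : EuclideanSpace ℝ (Fin n)) ∈ interior K)
    (hLcomp : IsCompact L) (hLconv : Convex ℝ L)
    (hL0 : (0 : EuclideanSpace ℝ (Fin n)) ∈ interior L) :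
    (⋂ l ∈ Ioo (0 : ℝ) 1,
        (α ^ (1 / p) * (1 - l) ^ (1 / q)) • K + (β ^ (1 / p) * l ^ (1 / q)) • L)
      = {x : EuclideanSpace ℝ (Fin n) |
          ∀ u : EuclideanSpace ℝ (Fin n), ‖u‖ = 1 →
            ⟪x, u⟫ ≤ (α * suppFn K u ^ p + β * suppFn L u ^ p) ^ (1 / p)} := by
  have hu0 {u : EuclideanSpace ℝ (Fin n)} (hu : ‖u‖ = 1) : u ≠ 0 :=
    norm_ne_zero_iff.1 (hu ▸ one_ne_zero)
  have le_rpow_mean_iff {u : EuclideanSpace ℝ (Fin n)} (hu : ‖u‖ = 1) (y : ℝ) :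
      y ≤ (α * suppFn K u ^ p + β * suppFn L u ^ p) ^ (1 / p) ↔ ∀ l ∈ Ioo (0 : ℝ) 1,
        y ≤ α ^ (1 / p) * (1 - l) ^ (1 / q) * suppFn K u
          + β ^ (1 / p) * l ^ (1 / q) * suppFn L u := by
    rw [le_isGLB_iff (isLeast_rpow_mean hp0 hp1 hpq hα hβ (suppFn_pos hKcomp hK0 (hu0 hu))
      (suppFn_pos hLcomp hL0 (hu0 hu))).isGLB, mem_lowerBounds, forall_mem_image]
  ext x
  simp only [mem_iInter]
  calc (∀ l ∈ Ioo (0 : ℝ) 1,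
        x ∈ (α ^ (1 / p) * (1 - l) ^ (1 / q)) • K + (β ^ (1 / p) * l ^ (1 / q)) • L)
      ↔ ∀ l ∈ Ioo (0 : ℝ) 1, ∀ u : EuclideanSpace ℝ (Fin n), ‖u‖ = 1 → ⟪x, u⟫ ≤
          α ^ (1 / p) * (1 - l) ^ (1 / q) * suppFn K u
            + β ^ (1 / p) * l ^ (1 / q) * suppFn L u :=
        forall₂_congr fun l hl => mem_smul_add_smul_iff hKcomp hKconv ⟨0, interior_subset hK0⟩
          hLcomp hLconv ⟨0, interior_subset hL0⟩
          (mul_nonneg (by positivity) (Real.rpow_nonneg (sub_nonneg.2 hl.2.le) _))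
          (mul_nonneg (by positivity) (Real.rpow_nonneg hl.1.le _))
    _ ↔ _ := ⟨fun h u hu => (le_rpow_mean_iff hu _).2 fun l hl => h l hl u hu,
        fun h l hl u hu => (le_rpow_mean_iff hu _).1 (h u hu) l hl⟩
end

section
/- Let 0 < p < 1 with 1/p + 1/q = 1 (so q < 0), let s > 0, let t ∈ (0,1), and let A, B ⊆ ℝ^n be nonempty Borel sets each containing the origin in its interior. Then the L_{p,s} inf-sup-convolution of the characteristic functions χ_A and χ_B with weights (1−t, t) equals the characteristic function of the L_p combination (1−t) ·_p A +_p t ·_p B; that is, for every z ∈ ℝ^n, inf_{λ∈(0,1)} sup_{z = C_{p,λ,t} x + D_{p,λ,t} y} M_s^{(C_{p,λ,t}, D_{p,λ,t})}(χ_A(x), χ_B(y)) = χ_{(1−t)·_p A +_p t·_p B}(z). -/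
/-!
On characteristic functions the `s`-mean takes only the values `(C + D)^{1/s}` (on `A × B`) and
`0`, so for fixed `λ` the supremum over `z = C x + D y` is `(C_λ + D_λ)^{1/s}` on `C_λ A + D_λ B`
and `0` off it. Since `1/p ≥ 1` and `1/q = 1 - 1/p`, convexity of `x ↦ x^{1/p}` (a reverse Hölder
inequality) gives `C_λ + D_λ ≥ ((1 - t) + t)^{1/p} = 1`, with equality at `λ = t`. Hence the
infimum over `λ` is `1` if `z` lies in every `C_λ A + D_λ B` and `0` otherwise.
-/

open Set
open scoped Pointwise

noncomputable def Ms (s a b u v : ℝ) : ℝ :=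
  if 0 < u * v then
    (if s = 0 then u ^ a * v ^ b else (a * u ^ s + b * v ^ s) ^ (1 / s))
  else 0

lemma Ms_indicator_one {α β : Type*} {s : ℝ} (hs : s ≠ 0) (a b : ℝ) (A : Set α) (B : Set β)
    (x : α) (y : β) :
    Ms s a b (A.indicator 1 x) (B.indicator 1 y)
      = (A ×ˢ B).indicator (fun _ => (a + b) ^ (1 / s)) (x, y) := by
  by_cases hx : x ∈ A <;> by_cases hy : y ∈ B <;> simp [Ms, hx, hy, hs]

lemma sSup_Ms_indicator_one {E : Type*} [AddCommGroup E] [Module ℝ E] {s C D : ℝ}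
    (hs : s ≠ 0) (hC : C ≠ 0) (hCD : 0 ≤ C + D) (A B : Set E) (z : E) :
    sSup {m : ℝ | ∃ x y : E, z = C • x + D • y ∧
        m = Ms s C D (A.indicator 1 x) (B.indicator 1 y)}
      = (C • A + D • B).indicator (fun _ => (C + D) ^ (1 / s)) z := by
  by_cases hz : z ∈ C • A + D • B
  · obtain ⟨_, ⟨x, hx, rfl⟩, _, ⟨y, hy, rfl⟩, hxy⟩ := hz
    rw [← hxy, indicator_of_mem (add_mem_add (smul_mem_smul_set hx) (smul_mem_smul_set hy))]
    refine IsGreatest.csSup_eq ⟨⟨x, y, rfl, ?_⟩, ?_⟩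
    · rw [Ms_indicator_one hs, indicator_of_mem (mk_mem_prod hx hy)]
    · rintro m ⟨x', y', -, rfl⟩
      rw [Ms_indicator_one hs]
      exact indicator_le_self' (fun _ _ => Real.rpow_nonneg hCD _) _
  · have hzero : ∀ x y : E, z = C • x + D • y →
        Ms s C D (A.indicator 1 x) (B.indicator 1 y) = 0 := by
      rintro x y rfl
      rw [Ms_indicator_one hs, indicator_of_notMem]
      rintro ⟨hx, hy⟩
      exact hz (add_mem_add (smul_mem_smul_set hx) (smul_mem_smul_set hy))
    have hdecomp : z = C • (C⁻¹ • z) + D • (0 : E) := by simp [smul_smul, hC]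
    rw [indicator_of_notMem hz]
    refine IsGreatest.csSup_eq ⟨⟨_, _, hdecomp, (hzero _ _ hdecomp).symm⟩, ?_⟩
    rintro m ⟨x, y, hxy, rfl⟩
    exact (hzero x y hxy).le

lemma iInf_indicator_eq_indicator_iInter {ι α : Type*} {S : ι → Set α} {c : ι → ℝ}
    (hc : ∀ i, 1 ≤ c i) {i₀ : ι} (hc₀ : c i₀ = 1) (z : α) :
    ⨅ i, (S i).indicator (fun _ => c i) z = (⋂ i, S i).indicator 1 z := by
  by_cases hz : z ∈ ⋂ i, S i
  · rw [indicator_of_mem hz, Pi.one_apply]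
    simp only [indicator_of_mem (mem_iInter.1 hz _)]
    exact IsLeast.csInf_eq ⟨⟨i₀, hc₀⟩, forall_mem_range.2 hc⟩
  · rw [indicator_of_notMem hz]
    obtain ⟨i, hi⟩ : ∃ i, z ∉ S i := by simpa using hz
    refine IsLeast.csInf_eq ⟨⟨i, indicator_of_notMem hi _⟩, forall_mem_range.2 fun j => ?_⟩
    exact indicator_nonneg (fun _ _ => zero_le_one.trans (hc j)) _

lemma rpow_add_le_rpow_mul_rpow_add_rpow_mul_rpow {r w₁ w₂ a b : ℝ} (hr : 1 ≤ r)
    (hw₁ : 0 < w₁) (hw₂ : 0 < w₂) (hw : w₁ + w₂ = 1) (ha : 0 ≤ a) (hb : 0 ≤ b) :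
    (a + b) ^ r ≤ a ^ r * w₁ ^ (1 - r) + b ^ r * w₂ ^ (1 - r) := by
  have hconv := (convexOn_rpow hr).2 (mem_Ici.2 (div_nonneg ha hw₁.le))
    (mem_Ici.2 (div_nonneg hb hw₂.le)) hw₁.le hw₂.le hw
  simp only [smul_eq_mul, mul_div_cancel₀ _ hw₁.ne', mul_div_cancel₀ _ hw₂.ne'] at hconv
  calc (a + b) ^ r ≤ w₁ * (a / w₁) ^ r + w₂ * (b / w₂) ^ r := hconv
    _ = a ^ r * w₁ ^ (1 - r) + b ^ r * w₂ ^ (1 - r) := by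
      rw [Real.div_rpow ha hw₁.le, Real.div_rpow hb hw₂.le, Real.rpow_sub hw₁,
        Real.rpow_sub hw₂, Real.rpow_one, Real.rpow_one]
      ring

/-- `C_{p,λ,t} = lpCoeff p q (1 - t) (1 - λ)` and `D_{p,λ,t} = lpCoeff p q t λ`. -/
noncomputable def lpCoeff (p q t l : ℝ) : ℝ := t ^ (1 / p) * l ^ (1 / q)

lemma lpCoeff_pos (p q : ℝ) {t l : ℝ} (ht : 0 < t) (hl : 0 < l) : 0 < lpCoeff p q t l := by
  unfold lpCoeff
  positivity

lemma lpCoeff_self {p q t : ℝ} (hpq : 1 / p + 1 / q = 1) (ht : 0 ≤ t) : lpCoeff p q t t = t := by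
  rw [lpCoeff, ← Real.rpow_add' ht (by rw [hpq]; exact one_ne_zero), hpq, Real.rpow_one]

lemma one_le_lpCoeff_add_lpCoeff {p q t l : ℝ} (hp0 : 0 < p) (hp1 : p ≤ 1)
    (hpq : 1 / p + 1 / q = 1) (ht : t ∈ Icc (0 : ℝ) 1) (hl : l ∈ Ioo (0 : ℝ) 1) :
    1 ≤ lpCoeff p q (1 - t) (1 - l) + lpCoeff p q t l := by
  have hq : 1 / q = 1 - 1 / p := by linarith
  have hr : 1 ≤ 1 / p := by rwa [le_div_iff₀ hp0, one_mul]
  have := rpow_add_le_rpow_mul_rpow_add_rpow_mul_rpow hr (sub_pos.2 hl.2) hl.1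
    (sub_add_cancel 1 l) (sub_nonneg.2 ht.2) ht.1
  rwa [sub_add_cancel, Real.one_rpow, ← hq] at this

theorem stmt_6_general {n : ℕ} (p q s t : ℝ) (hp0 : 0 < p) (hp1 : p < 1)
    (hpq : 1 / p + 1 / q = 1) (hs : 0 < s) (ht : t ∈ Ioo (0 : ℝ) 1)
    (A B : Set (Fin n → ℝ))
    (z : Fin n → ℝ) :
    (⨅ l : Ioo (0 : ℝ) 1,
        sSup {m : ℝ | ∃ x y : Fin n → ℝ,
          z = ((1 - t) ^ (1 / p) * (1 - (l : ℝ)) ^ (1 / q)) • x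
                + (t ^ (1 / p) * (l : ℝ) ^ (1 / q)) • y ∧
          m = Ms s ((1 - t) ^ (1 / p) * (1 - (l : ℝ)) ^ (1 / q))
                (t ^ (1 / p) * (l : ℝ) ^ (1 / q))
                (A.indicator 1 x) (B.indicator 1 y)})
      = (⋂ l ∈ Ioo (0 : ℝ) 1,
          ((1 - t) ^ (1 / p) * (1 - l) ^ (1 / q)) • A
            + (t ^ (1 / p) * l ^ (1 / q)) • B).indicator 1 z := by
  have hsum (l : Ioo (0 : ℝ) 1) : 1 ≤ lpCoeff p q (1 - t) (1 - l) + lpCoeff p q t l :=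
    one_le_lpCoeff_add_lpCoeff hp0 hp1.le hpq (Ioo_subset_Icc_self ht) l.2
  have hsup (l : Ioo (0 : ℝ) 1) := sSup_Ms_indicator_one hs.ne'
    (lpCoeff_pos p q (sub_pos.2 ht.2) (sub_pos.2 l.2.2)).ne' (zero_le_one.trans (hsum l)) A B z
  have hinf := iInf_indicator_eq_indicator_iInter
    (S := fun l : Ioo (0 : ℝ) 1 => lpCoeff p q (1 - t) (1 - l) • A + lpCoeff p q t l • B)
    (fun l => Real.one_le_rpow (hsum l) (one_div_pos.2 hs).le) (i₀ := ⟨t, ht⟩)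
    (by rw [lpCoeff_self hpq (sub_pos.2 ht.2).le, lpCoeff_self hpq ht.1.le, sub_add_cancel,
      Real.one_rpow]) z
  rw [biInter_eq_iInter]
  exact (iInf_congr hsup).trans hinf

/-- For `0 < p < 1`, `s > 0` and `t ∈ (0,1)`, the `L_{p,s}`
inf-sup-convolution of the characteristic functions of Borel sets `A, B` (each
containing the origin in its interior) with weights `(1−t, t)` is the characteristic
function of the `L_p` combination `(1−t)·_p A +_p t·_p B = ⋂_{λ∈(0,1)}
((1−t)^{1/p}(1−λ)^{1/q} A + t^{1/p}λ^{1/q} B)`. -/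
theorem stmt_6 {n : ℕ} (p q s t : ℝ) (hp0 : 0 < p) (hp1 : p < 1)
    (hpq : 1 / p + 1 / q = 1) (hs : 0 < s) (ht : t ∈ Ioo (0 : ℝ) 1)
    (A B : Set (Fin n → ℝ)) (hA : MeasurableSet A) (hB : MeasurableSet B)
    (hAne : A.Nonempty) (hBne : B.Nonempty)
    (hA0 : (0 : Fin n → ℝ) ∈ interior A) (hB0 : (0 : Fin n → ℝ) ∈ interior B)
    (z : Fin n → ℝ) :
    (⨅ l : Ioo (0 : ℝ) 1,
        sSup {m : ℝ | ∃ x y : Fin n → ℝ,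
          z = ((1 - t) ^ (1 / p) * (1 - (l : ℝ)) ^ (1 / q)) • x
                + (t ^ (1 / p) * (l : ℝ) ^ (1 / q)) • y ∧
          m = Ms s ((1 - t) ^ (1 / p) * (1 - (l : ℝ)) ^ (1 / q))
                (t ^ (1 / p) * (l : ℝ) ^ (1 / q))
                (A.indicator 1 x) (B.indicator 1 y)})
      = (⋂ l ∈ Ioo (0 : ℝ) 1,
          ((1 - t) ^ (1 / p) * (1 - l) ^ (1 / q)) • A
            + (t ^ (1 / p) * l ^ (1 / q)) • B).indicator 1 z :=
  stmt_6_general p q s t hp0 hp1 hpq hs ht A B z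
end

section
/- Let p ≥ 1 with 1/p + 1/q = 1, let s ∈ ℝ, let j ∈ {0,…,n−1}, and let H be an (n−j)-dimensional linear subspace of ℝ^n. Then for all f, g ∈ F_s(ℝ^n), the projection of their L_{p,s} supremal-convolution equals the L_{p,s} supremal-convolution (computed in H) of their projections: P_H(f ⊕_{p,s} g) = (P_H f) ⊕_{p,s} (P_H g), where P_H f(z) = sup_{y ∈ H^⊥} f(z + y) for z ∈ H. -/
open Set MeasureTheory

/-- The (unweighted) `L_{p,s}` supremal-convolution on a real vector space `V`:
`(f ⊕_{p,s} g)(z) = sup_{λ∈[0,1]} sup_{z = (1−λ)^{1/q} x + λ^{1/q} y}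
  M_s^{((1−λ)^{1/q}, λ^{1/q})}(f(x), g(y))`, where `1/p + 1/q = 1`. -/
noncomputable def supConvPS {V : Type*} [AddCommGroup V] [Module ℝ V]
    (q s : ℝ) (f g : V → ℝ) (z : V) : ℝ :=
  ⨆ l : Icc (0 : ℝ) 1,
    sSup {m : ℝ | ∃ x y : V,
      z = ((1 - (l : ℝ)) ^ (1 / q)) • x + ((l : ℝ) ^ (1 / q)) • y ∧
      m = Ms s ((1 - (l : ℝ)) ^ (1 / q)) ((l : ℝ) ^ (1 / q)) (f x) (g y)}

/-- `f ∈ F_s(ℝⁿ)`: a nonnegative, upper semicontinuous, integrable, `s`-concave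
function with `f(0) = sup f > 0`. -/
def MemFs {n : ℕ} (s : ℝ) (f : EuclideanSpace ℝ (Fin n) → ℝ) : Prop :=
  (∀ x, 0 ≤ f x) ∧ UpperSemicontinuous f ∧ Integrable f ∧
    (∀ x, f x ≤ f 0) ∧ 0 < f 0 ∧
    (∀ x y : EuclideanSpace ℝ (Fin n), ∀ τ ∈ Icc (0 : ℝ) 1,
      Ms s (1 - τ) τ (f x) (f y) ≤ f ((1 - τ) • x + τ • y))

/-- The projection of `f` onto a subspace `H`: `P_H f(z) = sup_{y ∈ H^⊥} f(z + y)`. -/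
noncomputable def projF {n : ℕ} (H : Submodule ℝ (EuclideanSpace ℝ (Fin n)))
    (f : EuclideanSpace ℝ (Fin n) → ℝ) (z : H) : ℝ :=
  ⨆ y : Hᗮ, f ((z : EuclideanSpace ℝ (Fin n)) + (y : EuclideanSpace ℝ (Fin n)))

/-!
Let `π` be the projection onto `H` along a complement `K` (here `Hᗮ`), and `P f z` the supremum
of `f` over `z + K`. If `z + y = a x + b y'` with `y ∈ K`, then `z = a π x + b π y'` and
`f x ≤ P f (π x)`, `g y' ≤ P g (π y')`, which gives `P (f ⊕ g) ≤ P f ⊕ P g` since the mean `M`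
is monotone. Conversely, if `z = a x + b y` in `H`, choose `w₁, w₂ ∈ K` with `f (x + w₁)` and
`g (y + w₂)` close to `P f x` and `P g y`; then `z + (a w₁ + b w₂) = a (x + w₁) + b (y + w₂)`.
As `M` is homogeneous, `M (t u) (t v) → M u v` when `t → 1⁻`, so by monotonicity these
approximants bring `M` arbitrarily close to `M (P f x) (P g y)`. Boundedness of `f` and `g`
keeps all the real suprema involved away from their junk value.
-/

open Filter Topology

section Mean

variable {s a b u v : ℝ}

lemma Ms_nonneg (ha : 0 ≤ a) (hb : 0 ≤ b) (hu : 0 ≤ u) (hv : 0 ≤ v) : 0 ≤ Ms s a b u v := by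
  unfold Ms
  split_ifs
  · positivity
  · positivity
  · exact le_rfl

lemma Ms_of_not_pos (h : ¬0 < u * v) : Ms s a b u v = 0 := if_neg h

lemma Ms_mono {u' v' : ℝ} (ha : 0 ≤ a) (hb : 0 ≤ b) (hu : 0 ≤ u) (hv : 0 ≤ v)
    (huu' : u ≤ u') (hvv' : v ≤ v') : Ms s a b u v ≤ Ms s a b u' v' := by
  by_cases huv : 0 < u * v
  swap
  · rw [Ms_of_not_pos huv]
    exact Ms_nonneg ha hb (hu.trans huu') (hv.trans hvv')
  have hu0 : 0 < u := hu.lt_of_ne (by rintro rfl; simp at huv)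
  have hv0 : 0 < v := hv.lt_of_ne (by rintro rfl; simp at huv)
  have hu'0 := hu0.trans_le huu'
  have hv'0 := hv0.trans_le hvv'
  unfold Ms
  rw [if_pos huv, if_pos (mul_pos hu'0 hv'0)]
  rcases lt_trichotomy s 0 with hs | rfl | hs
  · rw [if_neg hs.ne, if_neg hs.ne]
    have hsum : a * u' ^ s + b * v' ^ s ≤ a * u ^ s + b * v ^ s :=
      add_le_add (mul_le_mul_of_nonneg_left (Real.rpow_le_rpow_of_nonpos hu0 huu' hs.le) ha)
        (mul_le_mul_of_nonneg_left (Real.rpow_le_rpow_of_nonpos hv0 hvv' hs.le) hb)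
    rcases (by positivity : 0 ≤ a * u' ^ s + b * v' ^ s).eq_or_lt with h0 | hpos
    · -- all weight is zero, so both means are `0 ^ (1 / s)`
      obtain ⟨hau, hbv⟩ := (add_eq_zero_iff_of_nonneg (by positivity) (by positivity)).1 h0.symm
      obtain rfl : a = 0 := (mul_eq_zero.1 hau).resolve_right (Real.rpow_pos_of_pos hu'0 s).ne'
      obtain rfl : b = 0 := (mul_eq_zero.1 hbv).resolve_right (Real.rpow_pos_of_pos hv'0 s).ne'
      simp
    · exact Real.rpow_le_rpow_of_nonpos hpos hsum (by rw [one_div]; exact inv_nonpos.2 hs.le)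
  · simp only [if_true]
    gcongr
  · rw [if_neg hs.ne', if_neg hs.ne']
    gcongr

lemma Ms_mul_mul {t : ℝ} (ha : 0 ≤ a) (hb : 0 ≤ b) (ht : 0 < t) (hu : 0 ≤ u) (hv : 0 ≤ v) :
    Ms s a b (t * u) (t * v) = (if s = 0 then t ^ (a + b) else t) * Ms s a b u v := by
  have hprod : t * u * (t * v) = t ^ 2 * (u * v) := by ring
  by_cases huv : 0 < u * v
  · unfold Ms
    rw [if_pos huv, if_pos (by rw [hprod]; positivity)]
    split_ifs with hs
    · rw [Real.mul_rpow ht.le hu, Real.mul_rpow ht.le hv, Real.rpow_add ht]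
      ring
    · rw [Real.mul_rpow ht.le hu, Real.mul_rpow ht.le hv,
        show a * (t ^ s * u ^ s) + b * (t ^ s * v ^ s) = t ^ s * (a * u ^ s + b * v ^ s) by ring,
        Real.mul_rpow (by positivity) (by positivity), one_div, Real.rpow_rpow_inv ht.le hs]
  · have htuv : ¬0 < t * u * (t * v) := by
      rwa [hprod, mul_pos_iff_of_pos_left (by positivity)]
    rw [Ms_of_not_pos huv, Ms_of_not_pos htuv, mul_zero]

lemma exists_lt_Ms_mul_mul {r U V : ℝ} (ha : 0 ≤ a) (hb : 0 ≤ b) (hU : 0 < U) (hV : 0 < V)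
    (hr : r < Ms s a b U V) : ∃ t ∈ Ioo (0 : ℝ) 1, r < Ms s a b (t * U) (t * V) := by
  set c : ℝ → ℝ := fun t => if s = 0 then t ^ (a + b) else t
  have hc : ContinuousAt c 1 := by
    by_cases hs : s = 0
    · simpa [c, hs] using Real.continuousAt_rpow_const 1 (a + b) (Or.inl one_ne_zero)
    · simp only [c, hs, if_false]
      exact continuousAt_id
  have hlim : Tendsto (fun t => c t * Ms s a b U V) (𝓝[<] 1) (𝓝 (Ms s a b U V)) := by
    have hc1 : c 1 = 1 := by simp [c]
    have := hc.tendsto.mul_const (Ms s a b U V)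
    rw [hc1, one_mul] at this
    exact this.mono_left nhdsWithin_le_nhds
  obtain ⟨t, hrt, ht⟩ :=
    ((hlim.eventually (lt_mem_nhds hr)).and (Ioo_mem_nhdsLT zero_lt_one)).exists
  exact ⟨t, ht, by rwa [Ms_mul_mul ha hb ht.1 hU.le hV.le]⟩

lemma exists_lt_Ms_of_lt_Ms_iSup {ι κ : Type*} [Nonempty ι] [Nonempty κ] {r : ℝ}
    {φ : ι → ℝ} {ψ : κ → ℝ} (ha : 0 ≤ a) (hb : 0 ≤ b) (hφ : ∀ i, 0 ≤ φ i) (hψ : ∀ k, 0 ≤ ψ k)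
    (hr : r < Ms s a b (⨆ i, φ i) (⨆ k, ψ k)) : ∃ i k, r < Ms s a b (φ i) (ψ k) := by
  obtain hr0 | hr0 := lt_or_ge r 0
  · obtain ⟨i⟩ := ‹Nonempty ι›
    obtain ⟨k⟩ := ‹Nonempty κ›
    exact ⟨i, k, hr0.trans_le (Ms_nonneg ha hb (hφ i) (hψ k))⟩
  have hpos : 0 < (⨆ i, φ i) * ⨆ k, ψ k := by
    by_contra h
    rw [Ms_of_not_pos h] at hr
    linarith
  have hU : 0 < ⨆ i, φ i := (Real.iSup_nonneg hφ).lt_of_ne (by intro h; simp [← h] at hpos)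
  have hV : 0 < ⨆ k, ψ k := (Real.iSup_nonneg hψ).lt_of_ne (by intro h; simp [← h] at hpos)
  obtain ⟨t, ⟨ht0, ht1⟩, hrt⟩ := exists_lt_Ms_mul_mul ha hb hU hV hr
  obtain ⟨i, hi⟩ := exists_lt_of_lt_ciSup (mul_lt_of_lt_one_left hU ht1)
  obtain ⟨k, hk⟩ := exists_lt_of_lt_ciSup (mul_lt_of_lt_one_left hV ht1)
  exact ⟨i, k, hrt.trans_le (Ms_mono ha hb (by positivity) (by positivity) hi.le hk.le)⟩

lemma Ms_le_two_rpow_mul_sq {K : ℝ} (ha : 0 ≤ a) (hb : 0 ≤ b) (hab : 1 ≤ a + b)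
    (hab2 : a + b ≤ 2) (hK : 1 ≤ K) (hu : 0 ≤ u) (hv : 0 ≤ v) (huK : u ≤ K) (hvK : v ≤ K) :
    Ms s a b u v ≤ 2 ^ |1 / s| * K ^ 2 := by
  have hK0 : 0 < K := zero_lt_one.trans_le hK
  calc Ms s a b u v ≤ Ms s a b (K * 1) (K * 1) := by
        simpa using Ms_mono ha hb hu hv huK hvK
    _ = (if s = 0 then K ^ (a + b) else K) * (if s = 0 then 1 else (a + b) ^ (1 / s)) := by
        rw [Ms_mul_mul ha hb hK0 zero_le_one zero_le_one]
        simp [Ms]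
    _ ≤ 2 ^ |1 / s| * K ^ 2 := by
        split_ifs with hs
        · rw [hs, mul_one, div_zero, abs_zero, Real.rpow_zero, one_mul, ← Real.rpow_natCast]
          exact Real.rpow_le_rpow_of_exponent_le hK (by norm_num; linarith)
        · have h2 : (a + b) ^ (1 / s) ≤ 2 ^ |1 / s| :=
            (Real.rpow_le_rpow_of_exponent_le hab (le_abs_self _)).trans
              (Real.rpow_le_rpow (by linarith) hab2 (abs_nonneg _))
          have hKsq : K ≤ K ^ 2 := by nlinarith
          calc K * (a + b) ^ (1 / s) ≤ K ^ 2 * 2 ^ |1 / s| := by gcongr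
            _ = _ := mul_comm _ _

end Mean

section SupConv

variable {V : Type*} [AddCommGroup V] [Module ℝ V] {q s : ℝ} {f g : V → ℝ}

lemma supConvPS_nonneg (hf : 0 ≤ f) (hg : 0 ≤ g) (z : V) : 0 ≤ supConvPS q s f g z :=
  Real.iSup_nonneg fun l => Real.sSup_nonneg <| by
    rintro _ ⟨x, y, -, rfl⟩
    exact Ms_nonneg (Real.rpow_nonneg (sub_nonneg.2 l.2.2) _) (Real.rpow_nonneg l.2.1 _)
      (hf x) (hg y)

lemma supConvPS_le {z : V} {C : ℝ} (hC : 0 ≤ C)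
    (h : ∀ l ∈ Icc (0 : ℝ) 1, ∀ x y, z = (1 - l) ^ (1 / q) • x + l ^ (1 / q) • y →
      Ms s ((1 - l) ^ (1 / q)) (l ^ (1 / q)) (f x) (g y) ≤ C) :
    supConvPS q s f g z ≤ C :=
  Real.iSup_le (fun l => Real.sSup_le (by rintro _ ⟨x, y, hz, rfl⟩; exact h l l.2 x y hz) hC) hC

lemma Ms_le_supConvPS {C : ℝ} (hC : 0 ≤ C)
    (hbound : ∀ l ∈ Icc (0 : ℝ) 1, ∀ x y, Ms s ((1 - l) ^ (1 / q)) (l ^ (1 / q)) (f x) (g y) ≤ C)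
    {l : ℝ} (hl : l ∈ Icc (0 : ℝ) 1) {x y z : V}
    (hz : z = (1 - l) ^ (1 / q) • x + l ^ (1 / q) • y) :
    Ms s ((1 - l) ^ (1 / q)) (l ^ (1 / q)) (f x) (g y) ≤ supConvPS q s f g z := by
  refine le_ciSup_of_le ⟨C, ?_⟩ ⟨l, hl⟩ (le_csSup ⟨C, ?_⟩ ⟨x, y, hz, rfl⟩)
  · rintro _ ⟨l', rfl⟩
    exact Real.sSup_le (by rintro _ ⟨x, y, -, rfl⟩; exact hbound l' l'.2 x y) hC
  · rintro _ ⟨x, y, -, rfl⟩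
    exact hbound l hl x y

lemma Ms_rpow_weights_le {θ l u v C : ℝ} (hθ : θ ∈ Icc (0 : ℝ) 1) (hl : l ∈ Icc (0 : ℝ) 1)
    (hu : u ∈ Icc 0 C) (hv : v ∈ Icc 0 C) :
    Ms s ((1 - l) ^ θ) (l ^ θ) u v ≤ 2 ^ |1 / s| * max C 1 ^ 2 := by
  obtain ⟨hl0, hl1⟩ := hl
  have h1 : 1 - l ≤ (1 - l) ^ θ := Real.self_le_rpow_of_le_one (by linarith) (by linarith) hθ.2
  have h2 : l ≤ l ^ θ := Real.self_le_rpow_of_le_one hl0 hl1 hθ.2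
  have h3 : (1 - l) ^ θ ≤ 1 := Real.rpow_le_one (by linarith) (by linarith) hθ.1
  have h4 : l ^ θ ≤ 1 := Real.rpow_le_one hl0 hl1 hθ.1
  exact Ms_le_two_rpow_mul_sq (by linarith) (by linarith) (by linarith) (by linarith)
    (le_max_right _ _) hu.1 hv.1 (hu.2.trans (le_max_left _ _)) (hv.2.trans (le_max_left _ _))

end SupConv

section FiberSup

variable {E : Type*} [AddCommGroup E] [Module ℝ E] {K : Submodule ℝ E} {f : E → ℝ} {C : ℝ}

noncomputable def fiberSup (K : Submodule ℝ E) (f : E → ℝ) (x : E) : ℝ :=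
  ⨆ y : K, f (x + y)

lemma fiberSup_nonneg (hf : 0 ≤ f) (x : E) : 0 ≤ fiberSup K f x :=
  Real.iSup_nonneg fun _ => hf _

lemma fiberSup_mem_Icc (hf : ∀ x, f x ∈ Icc 0 C) (x : E) : fiberSup K f x ∈ Icc 0 C :=
  ⟨fiberSup_nonneg (fun x => (hf x).1) x, ciSup_le fun _ => (hf _).2⟩

lemma le_fiberSup (hf : ∀ x, f x ≤ C) {x x' : E} (h : x - x' ∈ K) : f x ≤ fiberSup K f x' :=
  le_ciSup_of_le ⟨C, by rintro _ ⟨y, rfl⟩; exact hf _⟩ ⟨x - x', h⟩ (by simp)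

end FiberSup

section Projection

variable {E : Type*} [AddCommGroup E] [Module ℝ E] {H K : Submodule ℝ E} {q s C : ℝ}
  {f g : E → ℝ}

lemma fiberSup_supConvPS_le (hHK : IsCompl H K) (hq : 1 / q ∈ Icc (0 : ℝ) 1)
    (hf : ∀ x, f x ∈ Icc 0 C) (hg : ∀ x, g x ∈ Icc 0 C) (z : H) :
    fiberSup K (supConvPS q s f g) z ≤
      supConvPS q s (fun x : H => fiberSup K f x) (fun x : H => fiberSup K g x) z := by
  set Pf : H → ℝ := fun x => fiberSup K f x
  set Pg : H → ℝ := fun x => fiberSup K g x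
  have hPf (x : H) : Pf x ∈ Icc 0 C := fiberSup_mem_Icc hf x
  have hPg (x : H) : Pg x ∈ Icc 0 C := fiberSup_mem_Icc hg x
  have hRHS : 0 ≤ supConvPS q s Pf Pg z :=
    supConvPS_nonneg (fun x => (hPf x).1) (fun x => (hPg x).1) z
  refine Real.iSup_le (fun y => supConvPS_le hRHS fun l hl x' y' hzy => ?_) hRHS
  set π := H.projectionOnto K hHK
  have hz : z = (1 - l) ^ (1 / q) • π x' + l ^ (1 / q) • π y' := by
    simpa [π] using congrArg π hzy
  calc Ms s ((1 - l) ^ (1 / q)) (l ^ (1 / q)) (f x') (g y')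
      ≤ Ms s ((1 - l) ^ (1 / q)) (l ^ (1 / q)) (Pf (π x')) (Pg (π y')) :=
        Ms_mono (Real.rpow_nonneg (sub_nonneg.2 hl.2) _) (Real.rpow_nonneg hl.1 _)
          (hf x').1 (hg y').1
          (le_fiberSup (fun x => (hf x).2) (Submodule.sub_projection_mem hHK x'))
          (le_fiberSup (fun x => (hg x).2) (Submodule.sub_projection_mem hHK y'))
    _ ≤ supConvPS q s Pf Pg z :=
        Ms_le_supConvPS (by positivity)
          (fun l hl x y => Ms_rpow_weights_le hq hl (hPf x) (hPg y)) hl hz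

lemma supConvPS_fiberSup_le (hq : 1 / q ∈ Icc (0 : ℝ) 1)
    (hf : ∀ x, f x ∈ Icc 0 C) (hg : ∀ x, g x ∈ Icc 0 C) (z : H) :
    supConvPS q s (fun x : H => fiberSup K f x) (fun x : H => fiberSup K g x) z ≤
      fiberSup K (supConvPS q s f g) z := by
  have hbound (l) (hl : l ∈ Icc (0 : ℝ) 1) (x y : E) :
      Ms s ((1 - l) ^ (1 / q)) (l ^ (1 / q)) (f x) (g y) ≤ 2 ^ |1 / s| * max C 1 ^ 2 :=
    Ms_rpow_weights_le hq hl (hf x) (hg y)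
  refine supConvPS_le (fiberSup_nonneg (supConvPS_nonneg (fun x => (hf x).1)
    (fun x => (hg x).1)) z) fun l hl x y hz => le_of_forall_lt fun r hr => ?_
  obtain ⟨w₁, w₂, hr⟩ := exists_lt_Ms_of_lt_Ms_iSup (Real.rpow_nonneg (sub_nonneg.2 hl.2) _)
    (Real.rpow_nonneg hl.1 _) (fun w : K => (hf ((x : E) + w)).1)
    (fun w : K => (hg ((y : E) + w)).1) hr
  set w : K := (1 - l) ^ (1 / q) • w₁ + l ^ (1 / q) • w₂
  have hzw : (z : E) + w = (1 - l) ^ (1 / q) • ((x : E) + w₁) + l ^ (1 / q) • ((y : E) + w₂) := by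
    rw [hz]
    simp only [w, Submodule.coe_add, Submodule.coe_smul]
    module
  have hS (x : E) : supConvPS q s f g x ≤ 2 ^ |1 / s| * max C 1 ^ 2 :=
    supConvPS_le (by positivity) fun l hl x y _ => hbound l hl x y
  calc r < Ms s ((1 - l) ^ (1 / q)) (l ^ (1 / q)) (f ((x : E) + w₁)) (g ((y : E) + w₂)) := hr
    _ ≤ supConvPS q s f g ((z : E) + w) := Ms_le_supConvPS (by positivity) hbound hl hzw
    _ ≤ fiberSup K (supConvPS q s f g) z := le_fiberSup hS (by simp)

theorem fiberSup_supConvPS (hHK : IsCompl H K) (hq : 1 / q ∈ Icc (0 : ℝ) 1)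
    (hf : ∀ x, f x ∈ Icc 0 C) (hg : ∀ x, g x ∈ Icc 0 C) (z : H) :
    fiberSup K (supConvPS q s f g) z =
      supConvPS q s (fun x : H => fiberSup K f x) (fun x : H => fiberSup K g x) z :=
  (fiberSup_supConvPS_le hHK hq hf hg z).antisymm (supConvPS_fiberSup_le hq hf hg z)

end Projection

theorem stmt_18_general {n : ℕ} (p q s : ℝ) (hp : 1 ≤ p) (hpq : 1 / p + 1 / q = 1)
    (H : Submodule ℝ (EuclideanSpace ℝ (Fin n)))
    (f g : EuclideanSpace ℝ (Fin n) → ℝ) (hf : MemFs s f) (hg : MemFs s g) :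
    projF H (supConvPS q s f g) = supConvPS q s (projF H f) (projF H g) := by
  have hp' : 1 / p ∈ Ioc (0 : ℝ) 1 := ⟨by positivity, by rw [div_le_one (by positivity)]; exact hp⟩
  have hq : 1 / q ∈ Icc (0 : ℝ) 1 := ⟨by linarith [hp'.2], by linarith [hp'.1]⟩
  funext z
  exact fiberSup_supConvPS H.isCompl_orthogonal hq
    (fun x => ⟨hf.1 x, (hf.2.2.2.1 x).trans (le_max_left _ (g 0))⟩)
    (fun x => ⟨hg.1 x, (hg.2.2.2.1 x).trans (le_max_right (f 0) _)⟩) z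

/-- For `p ≥ 1`, `s ∈ ℝ`, `j ∈ {0,…,n−1}` and an
`(n−j)`-dimensional subspace `H` of `ℝⁿ`, the projection of the `L_{p,s}`
supremal-convolution of `f, g ∈ F_s(ℝⁿ)` equals the `L_{p,s}` supremal-convolution,
computed in `H`, of their projections. -/
theorem stmt_18 {n : ℕ} (p q s : ℝ) (hp : 1 ≤ p) (hpq : 1 / p + 1 / q = 1)
    (j : ℕ) (hj : j < n) (H : Submodule ℝ (EuclideanSpace ℝ (Fin n)))
    (hH : Module.finrank ℝ H = n - j)
    (f g : EuclideanSpace ℝ (Fin n) → ℝ) (hf : MemFs s f) (hg : MemFs s g) :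
    projF H (supConvPS q s f g) = supConvPS q s (projF H f) (projF H g) :=
  stmt_18_general p q s hp hpq H f g hf hg
end

section
/- Let p ≥ 1, let u, v ∈ C_s(ℝ^n), let α, β ≥ 0, and let H be a linear subspace of ℝ^n. Then the inf-projection onto H of the L_p addition of u and v equals the L_p addition (computed within H) of the inf-projections: [(α ⊠_p u) ⊞_p (β ⊠_p v)]_H = (α ⊠_p u_H) ⊞_p (β ⊠_p v_H). Here w_H(x) = inf_{y ∈ H^⊥} w(x + y) for x ∈ H, the L_p addition of convex base functions is defined by (α ⊠_p u) ⊞_p (β ⊠_p v) = [ (α (u*)^p + β (v*)^p)^{1/p} ]*, with all Legendre transforms on the left side taken in ℝ^n and those on the right side taken within H. -/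
open Set
open scoped RealInnerProductSpace

/-- `u` belongs to the class `C_s`: `u : V → [0,∞]` is convex, lower semicontinuous,
`u(0) = 0`, and `u(x)/‖x‖ → ∞` as `‖x‖ → ∞` (supercoercivity). -/
def MemCs {V : Type*} [NormedAddCommGroup V] [InnerProductSpace ℝ V]
    (u : V → EReal) : Prop :=
  (∀ x, (0 : EReal) ≤ u x) ∧ u 0 = 0 ∧ LowerSemicontinuous u ∧
  (∀ x y : V, ∀ τ : ℝ, τ ∈ Icc (0 : ℝ) 1 →
    u (τ • x + (1 - τ) • y) ≤ (τ : EReal) * u x + ((1 - τ : ℝ) : EReal) * u y) ∧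
  (∀ M : ℝ, ∃ R : ℝ, ∀ x : V, R ≤ ‖x‖ → ((M * ‖x‖ : ℝ) : EReal) ≤ u x)

/-- The Legendre transform `u*(x) = sup_y (⟨x,y⟫ − u(y))` of an extended-real-valued
function `u`; for `u ∈ C_s` the supremum is finite and nonnegative, and we record
its real value. -/
noncomputable def legT {V : Type*} [NormedAddCommGroup V] [InnerProductSpace ℝ V]
    (u : V → EReal) (x : V) : ℝ :=
  (⨆ y : V, ((⟪x, y⟫ : ℝ) : EReal) - u y).toReal

/-- The Legendre transform of a real-valued function, with values in `[−∞,∞]`. -/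
noncomputable def legE {V : Type*} [NormedAddCommGroup V] [InnerProductSpace ℝ V]
    (w : V → ℝ) (x : V) : EReal :=
  ⨆ y : V, ((⟪x, y⟫ - w y : ℝ) : EReal)

/-- The `L_p` addition of convex base functions:
`(α ⊠_p u) ⊞_p (β ⊠_p v) = [(α (u*)^p + β (v*)^p)^{1/p}]*`. -/
noncomputable def lpAdd {V : Type*} [NormedAddCommGroup V] [InnerProductSpace ℝ V]
    (p α β : ℝ) (u v : V → EReal) : V → EReal :=
  legE fun y => (α * legT u y ^ p + β * legT v y ^ p) ^ (1 / p)

/-- The inf-projection of an extended-real-valued function onto a subspace `H`: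
`w_H(x) = inf_{y ∈ H^⊥} w(x + y)` for `x ∈ H`. -/
noncomputable def projB {n : ℕ} (H : Submodule ℝ (EuclideanSpace ℝ (Fin n)))
    (w : EuclideanSpace ℝ (Fin n) → EReal) (x : H) : EReal :=
  ⨅ y : Hᗮ, w ((x : EuclideanSpace ℝ (Fin n)) + (y : EuclideanSpace ℝ (Fin n)))

/-!
Legendre duality exchanges restriction to `H` and inf-projection onto `H`: for a finite convex
`w` on `ℝⁿ`, the inf-projection of `w*` is the Legendre transform (within `H`) of `w|_H`. The
nontrivial inequality is a Hahn–Banach separation of the strict epigraph of `w` from the graph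
of an affine function over `H`. Since `(u_H)* = u*|_H`, both sides of the theorem are obtained
from `w = (α (u*)^p + β (v*)^p)^{1/p}`, which is convex by Minkowski's inequality.
-/

theorem EReal.coe_sub_iInf {ι : Sort*} (c : ℝ) (f : ι → EReal) :
    (c : EReal) - ⨅ i, f i = ⨆ i, ((c : EReal) - f i) := by
  have hadd : ContinuousAt (fun y : EReal => (c : EReal) + y) (-⨅ i, f i) :=
    (EReal.continuousAt_add (.inl (EReal.coe_ne_top c)) (.inl (EReal.coe_ne_bot c))).comp
      (continuous_const.prodMk continuous_id).continuousAt
  exact Antitone.map_iInf_of_continuousAt (hadd.comp continuous_neg.continuousAt)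
    (fun _ _ h => EReal.sub_le_sub le_rfl h) (EReal.sub_top _)

section Legendre

variable {V : Type*} [NormedAddCommGroup V] [InnerProductSpace ℝ V] {u : V → EReal}

theorem MemCs.iSup_inner_sub_nonneg (hu : MemCs u) (x : V) :
    0 ≤ ⨆ y : V, ((⟪x, y⟫ : ℝ) : EReal) - u y :=
  le_iSup_of_le 0 (by simp [hu.2.1])

theorem MemCs.exists_iSup_inner_sub_le (hu : MemCs u) (x : V) :
    ∃ B : ℝ, ⨆ y : V, ((⟪x, y⟫ : ℝ) : EReal) - u y ≤ B := by
  obtain ⟨R, hR⟩ := hu.2.2.2.2 ‖x‖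
  refine ⟨‖x‖ * max R 0, iSup_le fun y => ?_⟩
  have hxy := real_inner_le_norm x y
  have hB : 0 ≤ ‖x‖ * max R 0 := by positivity
  rcases le_or_gt R ‖y‖ with hy | hy
  · calc ((⟪x, y⟫ : ℝ) : EReal) - u y ≤ ((⟪x, y⟫ - ‖x‖ * ‖y‖ : ℝ) : EReal) :=
          EReal.sub_le_sub le_rfl (hR y hy)
      _ ≤ _ := EReal.coe_le_coe_iff.2 (by linarith)
  · calc ((⟪x, y⟫ : ℝ) : EReal) - u y ≤ ((⟪x, y⟫ : ℝ) : EReal) - 0 :=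
          EReal.sub_le_sub le_rfl (hu.1 y)
      _ ≤ _ := by
        rw [sub_zero, EReal.coe_le_coe_iff]
        nlinarith [norm_nonneg x, le_max_left R 0]

theorem MemCs.coe_legT (hu : MemCs u) (x : V) :
    (legT u x : EReal) = ⨆ y : V, ((⟪x, y⟫ : ℝ) : EReal) - u y := by
  obtain ⟨B, hB⟩ := hu.exists_iSup_inner_sub_le x
  exact EReal.coe_toReal (hB.trans_lt (EReal.coe_lt_top B)).ne
    ((hu.iSup_inner_sub_nonneg x).trans_lt' EReal.bot_lt_zero).ne'

theorem MemCs.legT_nonneg (hu : MemCs u) (x : V) : 0 ≤ legT u x := by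
  exact_mod_cast (hu.coe_legT x).symm ▸ hu.iSup_inner_sub_nonneg x

theorem MemCs.inner_sub_le_legT (hu : MemCs u) (x y : V) :
    ((⟪x, y⟫ : ℝ) : EReal) - u y ≤ legT u x :=
  (hu.coe_legT x).symm ▸ le_iSup (fun y => ((⟪x, y⟫ : ℝ) : EReal) - u y) y

theorem MemCs.convexOn_legT (hu : MemCs u) : ConvexOn ℝ univ (legT u) := by
  refine ⟨convex_univ, fun x _ y _ a b ha hb hab => ?_⟩
  rw [smul_eq_mul, smul_eq_mul, ← EReal.coe_le_coe_iff, hu.coe_legT]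
  refine iSup_le fun s => ?_
  rcases eq_or_ne (u s) ⊤ with htop | htop
  · simp [htop]
  obtain ⟨r, hr⟩ : ∃ r : ℝ, u s = r :=
    ⟨_, (EReal.coe_toReal htop ((hu.1 s).trans_lt' EReal.bot_lt_zero).ne').symm⟩
  have hx := hu.inner_sub_le_legT x s
  have hy := hu.inner_sub_le_legT y s
  rw [hr, ← EReal.coe_sub, EReal.coe_le_coe_iff] at hx hy
  rw [hr, ← EReal.coe_sub, EReal.coe_le_coe_iff, inner_add_left, real_inner_smul_left,
    real_inner_smul_left]
  linear_combination mul_le_mul_of_nonneg_left hx ha + mul_le_mul_of_nonneg_left hy hb + r * hab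

end Legendre

theorem legT_projB {n : ℕ} (H : Submodule ℝ (EuclideanSpace ℝ (Fin n)))
    (u : EuclideanSpace ℝ (Fin n) → EReal) (z : H) :
    legT (projB H u) z = legT u (z : EuclideanSpace ℝ (Fin n)) := by
  unfold legT projB
  simp_rw [EReal.coe_sub_iInf]
  congr 1
  apply le_antisymm
  · refine iSup₂_le fun y k => le_iSup_of_le ((y : EuclideanSpace ℝ (Fin n)) + k) ?_
    rw [inner_add_right, Submodule.inner_right_of_mem_orthogonal z.2 k.2, add_zero,
      Submodule.coe_inner]
  · refine iSup_le fun s => ?_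
    obtain ⟨a, ha, b, hb, rfl⟩ := H.exists_add_mem_mem_orthogonal s
    refine le_iSup₂_of_le (⟨a, ha⟩ : H) (⟨b, hb⟩ : Hᗮ) ?_
    rw [inner_add_right, Submodule.inner_right_of_mem_orthogonal z.2 hb, add_zero,
      Submodule.coe_inner]

section LpCombination

variable {p : ℝ}

theorem Real.rpow_add_rpow_rpow_one_div_add_le (hp : 1 ≤ p) {a b a' b' : ℝ} (ha : 0 ≤ a)
    (hb : 0 ≤ b) (ha' : 0 ≤ a') (hb' : 0 ≤ b') :
    ((a + a') ^ p + (b + b') ^ p) ^ (1 / p)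
      ≤ (a ^ p + b ^ p) ^ (1 / p) + (a' ^ p + b' ^ p) ^ (1 / p) := by
  have := Real.Lp_add_le_of_nonneg (s := Finset.univ) (f := ![a, b]) (g := ![a', b']) hp
    (by simp [Fin.forall_fin_two, ha, hb]) (by simp [Fin.forall_fin_two, ha', hb'])
  simpa [Fin.sum_univ_two] using this

theorem Real.mul_rpow_add_mul_rpow_rpow_one_div (hp : p ≠ 0) {t a b : ℝ} (ht : 0 ≤ t)
    (ha : 0 ≤ a) (hb : 0 ≤ b) :
    ((t * a) ^ p + (t * b) ^ p) ^ (1 / p) = t * (a ^ p + b ^ p) ^ (1 / p) := by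
  rw [Real.mul_rpow ht ha, Real.mul_rpow ht hb, ← mul_add,
    Real.mul_rpow (by positivity) (by positivity), ← Real.rpow_mul ht, mul_one_div,
    div_self hp, Real.rpow_one]

variable {E : Type*} [AddCommGroup E] [Module ℝ E] {s : Set E} {F G : E → ℝ}

theorem ConvexOn.rpow_add_rpow_rpow_one_div (hp : 1 ≤ p) (hF : ConvexOn ℝ s F)
    (hG : ConvexOn ℝ s G) (hF0 : ∀ x ∈ s, 0 ≤ F x) (hG0 : ∀ x ∈ s, 0 ≤ G x) :
    ConvexOn ℝ s fun x => (F x ^ p + G x ^ p) ^ (1 / p) := by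
  have hp0 : p ≠ 0 := (zero_lt_one.trans_le hp).ne'
  refine ⟨hF.1, fun x hx y hy a b ha hb hab => ?_⟩
  simp only [smul_eq_mul]
  calc (F (a • x + b • y) ^ p + G (a • x + b • y) ^ p) ^ (1 / p)
      ≤ ((a * F x + b * F y) ^ p + (a * G x + b * G y) ^ p) ^ (1 / p) := by
        have hxy := hF.1 hx hy ha hb hab
        have := hF0 _ hxy; have := hG0 _ hxy
        gcongr
        exacts [hF.2 hx hy ha hb hab, hG.2 hx hy ha hb hab]
    _ ≤ ((a * F x) ^ p + (a * G x) ^ p) ^ (1 / p) + ((b * F y) ^ p + (b * G y) ^ p) ^ (1 / p) :=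
        Real.rpow_add_rpow_rpow_one_div_add_le hp (mul_nonneg ha (hF0 x hx))
          (mul_nonneg ha (hG0 x hx)) (mul_nonneg hb (hF0 y hy)) (mul_nonneg hb (hG0 y hy))
    _ = a * (F x ^ p + G x ^ p) ^ (1 / p) + b * (F y ^ p + G y ^ p) ^ (1 / p) := by
        rw [Real.mul_rpow_add_mul_rpow_rpow_one_div hp0 ha (hF0 x hx) (hG0 x hx),
          Real.mul_rpow_add_mul_rpow_rpow_one_div hp0 hb (hF0 y hy) (hG0 y hy)]

theorem ConvexOn.mul_rpow_add_mul_rpow_rpow_one_div (hp : 1 ≤ p) {α β : ℝ} (hα : 0 ≤ α)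
    (hβ : 0 ≤ β) (hF : ConvexOn ℝ s F) (hG : ConvexOn ℝ s G) (hF0 : ∀ x ∈ s, 0 ≤ F x)
    (hG0 : ∀ x ∈ s, 0 ≤ G x) :
    ConvexOn ℝ s fun x => (α * F x ^ p + β * G x ^ p) ^ (1 / p) := by
  have hpow : ∀ {γ t : ℝ}, 0 ≤ γ → 0 ≤ t → (γ ^ (1 / p) * t) ^ p = γ * t ^ p :=
    fun hγ ht => by
      rw [Real.mul_rpow (by positivity) ht, ← Real.rpow_mul hγ,
        one_div_mul_cancel (zero_lt_one.trans_le hp).ne', Real.rpow_one]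
  refine ((hF.smul (by positivity : 0 ≤ α ^ (1 / p))).rpow_add_rpow_rpow_one_div hp
    (hG.smul (by positivity : 0 ≤ β ^ (1 / p))) (fun x hx => ?_) (fun x hx => ?_)).congr
    fun x hx => ?_
  · have := hF0 x hx; simp only [smul_eq_mul]; positivity
  · have := hG0 x hx; simp only [smul_eq_mul]; positivity
  · simp only [smul_eq_mul, hpow hα (hF0 x hx), hpow hβ (hG0 x hx)]

end LpCombination

section Duality

variable {V : Type*} [NormedAddCommGroup V] [InnerProductSpace ℝ V] [FiniteDimensional ℝ V]
  {w : V → ℝ}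

theorem ConvexOn.exists_inner_sub_le_of_forall_mem (hw : ConvexOn ℝ univ w)
    {H : Submodule ℝ V} {x : V} {c : ℝ} (hc : ∀ z ∈ H, ⟪x, z⟫ - w z ≤ c) :
    ∃ ξ, ξ - x ∈ Hᗮ ∧ ∀ s, ⟪ξ, s⟫ - w s ≤ c := by
  -- Separate the strict epigraph of `w` from the graph of `⟪x, ·⟫ - c` over `H`.
  have hcont : Continuous w := continuousOn_univ.mp (hw.continuousOn isOpen_univ)
  set A : Set (V × ℝ) := {q | q.1 ∈ univ ∧ w q.1 < q.2}
  set B : Set (V × ℝ) := {q | q.1 ∈ H ∧ q.2 = ⟪x, q.1⟫ - c}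
  have hA : IsOpen A := by
    simpa [A] using isOpen_lt (hcont.comp continuous_fst) continuous_snd
  have hB : Convex ℝ B := by
    rintro ⟨s₁, t₁⟩ ⟨hs₁, ht₁⟩ ⟨s₂, t₂⟩ ⟨hs₂, ht₂⟩ a b - - hab
    refine ⟨H.add_mem (H.smul_mem a hs₁) (H.smul_mem b hs₂), ?_⟩
    simp only [Prod.smul_mk, Prod.mk_add_mk, smul_eq_mul, inner_add_right, real_inner_smul_right]
      at ht₁ ht₂ ⊢
    linear_combination a * ht₁ + b * ht₂ - c * hab
  have hAB : Disjoint A B := by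
    refine Set.disjoint_left.2 fun q hqA hqB => ?_
    have := hc q.1 hqB.1
    linarith [hqA.2, hqB.2]
  obtain ⟨f, r, hfA, hfB⟩ := geometric_hahn_banach_open hw.convex_strict_epigraph hA hB hAB
  set φ := f.comp (ContinuousLinearMap.inl ℝ V ℝ)
  set μ := -f (0, 1)
  have hf : ∀ s t, f (s, t) = φ s - μ * t := fun s t => by
    rw [show (s, t) = (s, 0) + t • ((0 : V), (1 : ℝ)) by simp, map_add, map_smul, smul_eq_mul]
    simp only [φ, μ, ContinuousLinearMap.comp_apply, ContinuousLinearMap.inl_apply]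
    ring
  have hfA' : ∀ s t, w s < t → φ s - μ * t < r := fun s t h => hf s t ▸ hfA (s, t) ⟨trivial, h⟩
  have hfB' : ∀ z ∈ H, r ≤ φ z - μ * (⟪x, z⟫ - c) := fun z hz => hf _ _ ▸ hfB _ ⟨hz, rfl⟩
  have hr : r ≤ μ * c := by simpa using hfB' 0 H.zero_mem
  have hμ : 0 < μ := by
    by_contra! hμ
    have := hfA' 0 (max (w 0 + 1) (-c)) (lt_max_of_lt_left (lt_add_one _))
    simp only [map_zero, zero_sub] at this
    nlinarith [le_max_right (w 0 + 1) (-c)]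
  -- a linear functional bounded below on a subspace vanishes on it
  have hφH : ∀ z ∈ H, φ z = μ * ⟪x, z⟫ := by
    intro z hz
    have hk : ∀ k : ℝ, r - μ * c ≤ k * (φ z - μ * ⟪x, z⟫) := fun k => by
      have := hfB' (k • z) (H.smul_mem k hz)
      rw [map_smul, real_inner_smul_right, smul_eq_mul] at this
      linarith
    by_contra hne
    have := hk ((r - μ * c - 1) / (φ z - μ * ⟪x, z⟫))
    rw [div_mul_cancel₀ _ (sub_ne_zero.2 hne)] at this
    linarith
  have hφw : ∀ s, φ s - μ * w s ≤ μ * c := fun s =>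
    le_of_forall_pos_lt_add fun ε hε => by
      have := hfA' s (w s + ε / μ) (by linarith [div_pos hε hμ])
      rw [mul_add, mul_div_cancel₀ _ hμ.ne'] at this
      linarith
  refine ⟨(InnerProductSpace.toDual ℝ V).symm (μ⁻¹ • φ), ?_, fun s => ?_⟩
  · refine (Submodule.mem_orthogonal' _ _).2 fun z hz => ?_
    rw [inner_sub_left, InnerProductSpace.toDual_symm_apply, smul_apply,
      smul_eq_mul, hφH z hz, inv_mul_cancel_left₀ hμ.ne', sub_self]
  · rw [InnerProductSpace.toDual_symm_apply, smul_apply, smul_eq_mul,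
      inv_mul_eq_div, div_sub' hμ.ne', div_le_iff₀ hμ]
    linarith [hφw s]

theorem ConvexOn.iInf_legE_add_orthogonal (hw : ConvexOn ℝ univ w) (H : Submodule ℝ V)
    (x : H) : ⨅ y : Hᗮ, legE w ((x : V) + y) = legE (fun z : H => w z) x := by
  apply le_antisymm
  · refine EReal.le_of_forall_lt_iff_le.1 fun c hc => ?_
    have hxc : ∀ z ∈ H, ⟪(x : V), z⟫ - w z ≤ c := fun z hz => by
      have := (le_iSup (fun z : H => ((⟪x, z⟫ - w z : ℝ) : EReal)) ⟨z, hz⟩).trans hc.le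
      exact_mod_cast this
    obtain ⟨ξ, hξ, hξc⟩ := hw.exists_inner_sub_le_of_forall_mem hxc
    refine iInf_le_of_le ⟨ξ - x, hξ⟩ (iSup_le fun s => ?_)
    rw [add_sub_cancel]
    exact EReal.coe_le_coe_iff.2 (hξc s)
  · refine le_iInf fun y => iSup_le fun z => le_iSup_of_le (z : V) ?_
    rw [inner_add_left, Submodule.inner_left_of_mem_orthogonal z.2 y.2, add_zero,
      Submodule.coe_inner]

end Duality

/-- For `p ≥ 1`, `u, v ∈ C_s(ℝⁿ)`, `α, β ≥ 0` and a linear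
subspace `H` of `ℝⁿ`, the inf-projection onto `H` of the `L_p` addition of `u` and
`v` equals the `L_p` addition, computed within `H`, of the inf-projections:
`[(α ⊠_p u) ⊞_p (β ⊠_p v)]_H = (α ⊠_p u_H) ⊞_p (β ⊠_p v_H)`. -/
theorem stmt_19 {n : ℕ} (p : ℝ) (hp : 1 ≤ p) (α β : ℝ) (hα : 0 ≤ α) (hβ : 0 ≤ β)
    (u v : EuclideanSpace ℝ (Fin n) → EReal) (hu : MemCs u) (hv : MemCs v)
    (H : Submodule ℝ (EuclideanSpace ℝ (Fin n))) :
    projB H (lpAdd p α β u v)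
      = lpAdd p α β (projB H u) (projB H v) := by
  have hw := hu.convexOn_legT.mul_rpow_add_mul_rpow_rpow_one_div hp hα hβ hv.convexOn_legT
    (fun x _ => hu.legT_nonneg x) (fun x _ => hv.legT_nonneg x)
  funext x
  rw [projB, lpAdd, hw.iInf_legE_add_orthogonal H x, lpAdd]
  simp only [legT_projB]
end
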